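/- Let Σ be a finite nonempty alphabet, L ⊆ ℬ^Σ and T ∈ ℬ^Σ. Then the upper asymptotic density satisfies P̄_lim(LT) = (1/(|Σ|^{|T|}·4^{|T|+1})) · P̄_lim(L). -/

import Mathlib

/-!
Every tree of `LT` with `m + |T| + 1` nodes is `conc_a(S, T)` for a letter `a` and a tree `S ∈ L`
with `m` nodes, so the density of `LT` at `m + |T| + 1` is the density of `L` at `m` times
`C_m / (C_{m+|T|+1} |Σ|^|T|)`. As `C_{n+1} / C_n → 4`, this factor tends to
`1 / (|Σ|^|T| 4^(|T|+1))`, and the limsup of a bounded nonnegative sequence times a convergent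
nonnegative one is the product of the limsup and the limit.
-/

open Filter Topology

namespace Sparse

inductive BTree (α : Type*) where
  | nil : BTree α
  | node : α → BTree α → BTree α → BTree α

namespace BTree

variable {α : Type*}

/-- The number of nodes of a binary tree. -/
def size : BTree α → ℕ
  | nil => 0
  | node _ l r => size l + size r + 1

/-- `Subtree S T` means `S = T`, or `T` is nonempty and `S` is a subtree of the left or
right subtree of the root of `T`. -/
inductive Subtree : BTree α → BTree α → Prop where
  | refl (T : BTree α) : Subtree T T
  | left {S l r : BTree α} {a : α} : Subtree S l → Subtree S (node a l r)
  | right {S l r : BTree α} {a : α} : Subtree S r → Subtree S (node a l r)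

end BTree

variable {α : Type*}

/-- A run of a tree automaton with transition relation `Δ` on a binary tree: the empty tree is
assigned `none` (i.e. `⊥`), and a nonempty tree with root label `a` and run values `ql`, `qr` on
the two subtrees is assigned a state `q` with `(ql, qr, a, q) ∈ Δ`. -/
inductive Run {Q : Type*} (Δ : Option Q → Option Q → α → Q → Prop) :
    BTree α → Option Q → Prop where
  | nil : Run Δ BTree.nil none
  | node {a : α} {l r : BTree α} {ql qr : Option Q} {q : Q} :
      Run Δ l ql → Run Δ r qr → Δ ql qr a q → Run Δ (BTree.node a l r) (some q)

/-- A tree automaton with transitions `Δ` and accepting states `F` accepts `T` if some run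
assigns `T` a state in `F`. -/
def TAccepts {Q : Type*} (Δ : Option Q → Option Q → α → Q → Prop) (F : Set Q)
    (T : BTree α) : Prop :=
  ∃ q ∈ F, Run Δ T (some q)

/-- A tree language is regular iff it is the set of trees accepted by some tree automaton
with finitely many states. -/
def RegularTreeLang (L : Set (BTree α)) : Prop :=
  ∃ (Q : Type) (_ : Fintype Q) (Δ : Option Q → Option Q → α → Q → Prop) (F : Set Q),
    L = {T | TAccepts Δ F T}

/-- The relative number of `n`-node trees in `L`:
`|L ∩ ℬ^Σ_n| / (C_n ⬝ |Σ|^n)`, where `C_n` is the `n`-th Catalan number. -/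
noncomputable def density [Fintype α] (L : Set (BTree α)) (n : ℕ) : ℝ :=
  (Nat.card {T : BTree α // T ∈ L ∧ T.size = n} : ℝ) /
    ((catalan n : ℝ) * (Fintype.card α : ℝ) ^ n)

/-- `L` has asymptotic density `c` if `density L n` tends to `c` as `n → ∞`. -/
def HasDensity [Fintype α] (L : Set (BTree α)) (c : ℝ) : Prop :=
  Tendsto (density L) atTop (𝓝 c)

/-- The upper asymptotic density `P̄_lim(L) = limsup_n density L n`. -/
noncomputable def upperDensity [Fintype α] (L : Set (BTree α)) : ℝ :=
  limsup (density L) atTop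

/-- `LT = {conc_a(S, T) : a ∈ Σ, S ∈ L}`. -/
def concL (L : Set (BTree α)) (T : BTree α) : Set (BTree α) :=
  {X | ∃ (a : α) (S : BTree α), S ∈ L ∧ X = BTree.node a S T}

/-- `LT⁻¹ = {S : ∃ a, conc_a(S, T) ∈ L}`. -/
def quotR (L : Set (BTree α)) (T : BTree α) : Set (BTree α) :=
  {S | ∃ a : α, BTree.node a S T ∈ L}

/-- `T⁻¹L = {S : ∃ a, conc_a(T, S) ∈ L}`. -/
def quotL (T : BTree α) (L : Set (BTree α)) : Set (BTree α) :=
  {S | ∃ a : α, BTree.node a T S ∈ L}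

/-- `L[T_k, …, T_1]⁻¹`, where the list is `[T_k, …, T_1]` (so the head is `T_k`):
`L[]⁻¹ = L` and `L[T_k,…,T_1]⁻¹ = (L[T_{k-1},…,T_1]⁻¹)T_k⁻¹ ∪ T_k⁻¹(L[T_{k-1},…,T_1]⁻¹)`. -/
def quotIter (L : Set (BTree α)) : List (BTree α) → Set (BTree α)
  | [] => L
  | T :: Ts => quotR (quotIter L Ts) T ∪ quotL T (quotIter L Ts)

/-- A state `q` is reachable if some run of the automaton on some tree assigns `q` to the tree. -/
def TReachable {Q : Type*} (Δ : Option Q → Option Q → α → Q → Prop) (q : Q) : Prop :=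
  ∃ T : BTree α, Run Δ T (some q)

/-- A set of states `V` is a sink if every transition involving a state of `V` as one of the
two child values leads into `V`. -/
def Sink {Q : Type*} (Δ : Option Q → Option Q → α → Q → Prop) (V : Set Q) : Prop :=
  ∀ q ∈ V, ∀ (q' : Option Q) (a : α) (q'' : Q),
    (Δ (some q) q' a q'' ∨ Δ q' (some q) a q'') → q'' ∈ V

lemma catalan_pos (n : ℕ) : 0 < catalan n :=
  Nat.pos_of_ne_zero fun h => Nat.centralBinom_ne_zero n <| by
    rw [← succ_mul_catalan_eq_centralBinom, h, mul_zero]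

lemma add_two_mul_catalan_succ (n : ℕ) :
    (n + 2) * catalan (n + 1) = 2 * (2 * n + 1) * catalan n := by
  refine Nat.eq_of_mul_eq_mul_left (by omega : 0 < n + 1) ?_
  rw [succ_mul_catalan_eq_centralBinom, Nat.succ_mul_centralBinom_succ,
    ← succ_mul_catalan_eq_centralBinom]
  ring

lemma tendsto_catalan_div_catalan_succ :
    Tendsto (fun n => (catalan n : ℝ) / catalan (n + 1)) atTop (𝓝 4⁻¹) := by
  have hratio (n : ℕ) : (catalan n : ℝ) / catalan (n + 1) = (n + 2) / (4 * n + 2) := by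
    have hc : (catalan (n + 1) : ℝ) ≠ 0 := by exact_mod_cast (catalan_pos _).ne'
    rw [div_eq_div_iff hc (by positivity)]
    have := congrArg (Nat.cast (R := ℝ)) (add_two_mul_catalan_succ n)
    push_cast at this
    linear_combination -this
  have hlim : Tendsto (fun n : ℕ => (1 + 2 / (n : ℝ)) / (4 + 2 / n)) atTop
      (𝓝 ((1 + 0) / (4 + 0))) :=
    (tendsto_const_nhds.add (tendsto_const_div_atTop_nhds_zero_nat 2)).div
      (tendsto_const_nhds.add (tendsto_const_div_atTop_nhds_zero_nat 2)) (by norm_num)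
  rw [show ((1 : ℝ) + 0) / (4 + 0) = 4⁻¹ by norm_num] at hlim
  refine hlim.congr' ?_
  filter_upwards [eventually_ne_atTop 0] with n hn
  rw [hratio]
  field_simp

lemma tendsto_catalan_div_catalan_add (j : ℕ) :
    Tendsto (fun n => (catalan n : ℝ) / catalan (n + j)) atTop (𝓝 (4⁻¹ ^ j)) := by
  induction j with
  | zero =>
    simp_rw [add_zero, pow_zero]
    exact tendsto_const_nhds.congr fun n => (div_self (by exact_mod_cast (catalan_pos n).ne')).symm
  | succ j ih =>
    refine (ih.mul (tendsto_catalan_div_catalan_succ.comp (tendsto_add_atTop_nat j))).congr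
      fun n => ?_
    have hc : (catalan (n + j) : ℝ) ≠ 0 := by exact_mod_cast (catalan_pos _).ne'
    simp only [Function.comp_apply, ← add_assoc]
    exact div_mul_div_cancel₀ hc

theorem limsup_mul_eq_of_tendsto {ι : Type*} {f : Filter ι} [f.NeBot] {u v : ι → ℝ} {c : ℝ}
    (hu₀ : ∃ᶠ x in f, 0 ≤ u x) (hu : IsBoundedUnder (· ≤ ·) f u) (hv₀ : 0 ≤ᶠ[f] v)
    (hv : Tendsto v f (𝓝 c)) :
    limsup (fun x => u x * v x) f = limsup u f * c := by
  refine le_antisymm ((limsup_mul_le hu₀ hu hv₀ hv.isBoundedUnder_le).trans_eq ?_)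
    (le_of_eq_of_le ?_ (le_limsup_mul hu₀ hu hv₀ hv.isBoundedUnder_le))
  · rw [hv.limsup_eq]
  · rw [hv.liminf_eq]

namespace BTree

def shape : BTree α → BinaryTree Unit
  | nil => .nil
  | node _ l r => .node () (shape l) (shape r)

def preorder : BTree α → List α
  | nil => []
  | node a l r => a :: (preorder l ++ preorder r)

lemma numNodes_shape (T : BTree α) : T.shape.numNodes = T.size := by
  induction T with
  | nil => rfl
  | node a l r ihl ihr => simp [shape, size, ihl, ihr]

lemma length_preorder (T : BTree α) : T.preorder.length = T.size := by
  induction T with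
  | nil => rfl
  | node a l r ihl ihr => simp [preorder, size, ihl, ihr]

lemma eq_of_shape_eq_of_preorder_eq {S T : BTree α} (hs : S.shape = T.shape)
    (hp : S.preorder = T.preorder) : S = T := by
  induction S generalizing T with
  | nil => cases T <;> simp_all [shape]
  | node a l r ihl ihr =>
    cases T with
    | nil => simp [shape] at hs
    | node a' l' r' =>
      simp only [shape, BinaryTree.node.injEq, true_and] at hs
      simp only [preorder, List.cons.injEq] at hp
      have hlen : l.preorder.length = l'.preorder.length := by
        rw [length_preorder, length_preorder, ← numNodes_shape, ← numNodes_shape, hs.1]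
      obtain ⟨hl, hr⟩ := List.append_inj hp.2 hlen
      rw [hp.1, ihl hs.1 hl, ihr hs.2 hr]

end BTree

open BTree in
lemma card_mem_size_eq_le [Fintype α] (L : Set (BTree α)) (n : ℕ) :
    Nat.card {T : BTree α // T ∈ L ∧ T.size = n} ≤ catalan n * Fintype.card α ^ n := by
  let code (T : {T : BTree α // T ∈ L ∧ T.size = n}) :
      BinaryTree.treesOfNumNodesEq n × List.Vector α n :=
    (⟨T.1.shape, BinaryTree.mem_treesOfNumNodesEq.2 ((numNodes_shape _).trans T.2.2)⟩,
      ⟨T.1.preorder, (length_preorder _).trans T.2.2⟩)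
  have hcode : Function.Injective code := fun S T h =>
    Subtype.ext <| eq_of_shape_eq_of_preorder_eq (congrArg (·.1.1) h) (congrArg (·.2.1) h)
  calc Nat.card {T : BTree α // T ∈ L ∧ T.size = n}
      ≤ Nat.card (BinaryTree.treesOfNumNodesEq n × List.Vector α n) :=
        Nat.card_le_card_of_injective code hcode
    _ = catalan n * Fintype.card α ^ n := by
        rw [Nat.card_eq_fintype_card, Fintype.card_prod, Fintype.card_coe,
          BinaryTree.treesOfNumNodesEq_card_eq_catalan, card_vector]

lemma density_nonneg [Fintype α] (L : Set (BTree α)) (n : ℕ) : 0 ≤ density L n := by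
  unfold density
  positivity

lemma density_le_one [Fintype α] (L : Set (BTree α)) (n : ℕ) : density L n ≤ 1 :=
  div_le_one_of_le₀ (by exact_mod_cast card_mem_size_eq_le L n) (by positivity)

lemma card_concL_size_eq [Fintype α] (L : Set (BTree α)) (T : BTree α) (m : ℕ) :
    Nat.card {X : BTree α // X ∈ concL L T ∧ X.size = m + (T.size + 1)} =
      Fintype.card α * Nat.card {S : BTree α // S ∈ L ∧ S.size = m} := by
  rw [← Nat.card_eq_fintype_card, ← Nat.card_prod]
  symm
  refine Nat.card_congr (Equiv.ofBijective (fun p =>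
    ⟨.node p.1 p.2.1 T, ⟨p.1, p.2.1, p.2.2.1, rfl⟩, by simp [BTree.size, p.2.2.2]; omega⟩)
    ⟨?_, ?_⟩)
  · rintro ⟨a, S, _⟩ ⟨a', S', _⟩ h
    simp only [Subtype.mk.injEq, BTree.node.injEq] at h
    obtain ⟨rfl, rfl, -⟩ := h
    rfl
  · rintro ⟨_, ⟨a, S, hS, rfl⟩, hsize⟩
    exact ⟨(a, ⟨S, hS, by simp [BTree.size] at hsize; omega⟩), rfl⟩

lemma density_concL_add [Fintype α] [Nonempty α] (L : Set (BTree α)) (T : BTree α) (m : ℕ) :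
    density (concL L T) (m + (T.size + 1)) = density L m *
      ((catalan m : ℝ) / catalan (m + (T.size + 1)) / Fintype.card α ^ T.size) := by
  have : (0 : ℝ) < Fintype.card α := by exact_mod_cast Fintype.card_pos
  have : (0 : ℝ) < catalan m := by exact_mod_cast catalan_pos m
  rw [density, density, card_concL_size_eq]
  push_cast
  rw [pow_add, pow_succ]
  field_simp

/-- `P̄_lim(LT) = (1/(|Σ|^{|T|}·4^{|T|+1})) · P̄_lim(L)`. -/
theorem upperDensity_concL {α : Type*} [Fintype α] [Nonempty α]
    (L : Set (BTree α)) (T : BTree α) :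
    upperDensity (concL L T) =
      1 / ((Fintype.card α : ℝ) ^ T.size * 4 ^ (T.size + 1)) * upperDensity L := by
  have hshift : upperDensity (concL L T) = limsup (fun m => density L m *
      ((catalan m : ℝ) / catalan (m + (T.size + 1)) / Fintype.card α ^ T.size)) atTop := by
    rw [upperDensity, ← limsup_nat_add _ (T.size + 1)]
    simp only [density_concL_add]
  rw [hshift, limsup_mul_eq_of_tendsto (.of_forall (density_nonneg L))
    ⟨1, eventually_map.2 (.of_forall (density_le_one L))⟩ (.of_forall fun m => by positivity)
    ((tendsto_catalan_div_catalan_add _).div_const _), upperDensity]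
  simp only [one_div, mul_inv, inv_pow]
  ring

end Sparse
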